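/- arXiv:1805.00981 — 2 statements merged into one kernel-verified Lean document; each statement's English description precedes it below -/
import Mathlib

section
/- Let f : 𝔹 → 𝔹 be a regular homeomorphism of Sobolev class W^{1,1}_loc possessing Lusin's (N)-property, and let p > 1. Then for all 0 < r₁ < r₂ < 1, ∫_{r₁}^{r₂} L(r)^p / ((2πr)^{p-1} d_p(r)) dr ≤ S(r₂) − S(r₁) ≤ S(r₂), where L(r) denotes the length of the curve f(re^{iθ}), 0 ≤ θ ≤ 2π. -/
/-!
In polar coordinates the annulus `r₁ < |z| < r₂` becomes `(r₁, r₂) × (-π, π)` with area element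
`r dr dθ`. On almost every circle `|z| = r` the Jacobian is positive almost everywhere, and there
`|f_θ| = D_p^{1/p} (r^p J_f)^{1/p}`; Hölder's inequality with exponents `p/(p-1)` and `p` gives
`L(r)^p ≤ (2πr)^{p-1} d_p(r) · r ∫ J_f(re^{iθ}) dθ`. Integrating over `r`, the right-hand side
becomes the integral of `J_f` over the annulus, which is at most the area of its image because `f`
is injective, and this image lies in `f(B_{r₂}) \ f(B_{r₁})`.
-/

open MeasureTheory Filter Metric Set
open scoped Real Topology
noncomputable section

/-- The Jacobian determinant of `f : ℂ → ℂ` at `z` (via the a.e. existing total derivative). -/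
def jacobian (f : ℂ → ℂ) (z : ℂ) : ℝ := (fderiv ℝ f z).det

/-- The angular partial derivative `f_θ` of `f` at `z = r e^{iθ}`
(the derivative of `θ ↦ f (r e^{iθ})`). -/
def angDeriv (f : ℂ → ℂ) (z : ℂ) : ℂ := fderiv ℝ f z (Complex.I * z)

/-- The radial partial derivative `f_r` of `f` at `z = r e^{iθ}`. -/
def radDeriv (f : ℂ → ℂ) (z : ℂ) : ℂ := fderiv ℝ f z (z / (‖z‖ : ℂ))

/-- The `p`-angular dilatation `D_p(z) = |f_θ|^p / (r^p J_f)` of `f` at `z`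
with respect to the origin. -/
def angDil (f : ℂ → ℂ) (p : ℝ) (z : ℂ) : ℝ :=
  ‖angDeriv f z‖ ^ p / (‖z‖ ^ p * jacobian f z)

/-- `q_p(r) = ((1/(2πr)) ∫_{γ_r} Q^{1/(p-1)} |dz|)^{p-1}`, written via the arclength
parametrization of the circle `γ_r`. -/
def circMean (Q : ℂ → ℝ) (p : ℝ) (r : ℝ) : ℝ :=
  ((2 * Real.pi)⁻¹ * ∫ θ in (0:ℝ)..(2 * Real.pi),
    Q ((r : ℂ) * Complex.exp (Complex.I * (θ : ℂ))) ^ (1 / (p - 1))) ^ (p - 1)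

/-- `d_p(r)`: the quantity `q_p(r)` for `Q = D_p`. -/
def dMean (f : ℂ → ℂ) (p : ℝ) (r : ℝ) : ℝ := circMean (angDil f p) p r

/-- `S(r) = m(f(B_r))`, the area of the image of the disc of radius `r`. -/
def areaFn (f : ℂ → ℂ) (r : ℝ) : ℝ := (volume (f '' ball (0:ℂ) r)).toReal

/-- `L(r)`: the length of the curve `θ ↦ f(re^{iθ})`, `0 ≤ θ ≤ 2π`. -/
def curveLen (f : ℂ → ℂ) (r : ℝ) : ℝ :=
  ∫ θ in (0:ℝ)..(2 * Real.pi),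
    ‖angDeriv f ((r : ℂ) * Complex.exp (Complex.I * (θ : ℂ)))‖

/-- A regular homeomorphism of the unit disc onto itself of Sobolev class `W^{1,1}_loc`
possessing Lusin's (N)-property: a sense-preserving homeomorphism `𝔹 → 𝔹`,
differentiable a.e. with (positive, by sense-preservation) non-vanishing Jacobian a.e.,
with locally integrable differential, mapping null subsets of `𝔹` onto null sets. -/
def IsRegularHomeo (f : ℂ → ℂ) : Prop :=
  (∃ e : (ball (0:ℂ) 1) ≃ₜ (ball (0:ℂ) 1), ∀ z : (ball (0:ℂ) 1), (e z : ℂ) = f z) ∧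
  (∀ᵐ z ∂(volume.restrict (ball (0:ℂ) 1)), DifferentiableAt ℝ f z ∧ 0 < jacobian f z) ∧
  LocallyIntegrableOn (fun z => ‖fderiv ℝ f z‖) (ball (0:ℂ) 1) volume ∧
  (∀ s, s ⊆ ball (0:ℂ) 1 → volume s = 0 → volume (f '' s) = 0)

open scoped ENNReal

section MeasureSpace
variable {α : Type*} [MeasurableSpace α] {μ : Measure α}

theorem memLp_ofReal_of_integrable_rpow {g : α → ℝ} {q : ℝ} (hq : 0 < q) (hg : 0 ≤ᵐ[μ] g)
    (hg_meas : AEStronglyMeasurable g μ) (hint : Integrable (fun x => g x ^ q) μ) :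
    MemLp g (ENNReal.ofReal q) μ := by
  refine (integrable_norm_rpow_iff hg_meas (by simpa using hq) ENNReal.ofReal_ne_top).1
    (hint.congr ?_)
  filter_upwards [hg] with x (hx : 0 ≤ g x)
  rw [ENNReal.toReal_ofReal hq.le, Real.norm_of_nonneg hx]

theorem integral_le_of_weight {p : ℝ} (hp : 1 < p) {a w : α → ℝ}
    (ha : 0 ≤ᵐ[μ] a) (hw : ∀ᵐ x ∂μ, 0 < w x)
    (ha_meas : AEStronglyMeasurable a μ) (hw_meas : AEStronglyMeasurable w μ)
    (hD : Integrable (fun x => (a x ^ p / w x) ^ (1 / (p - 1))) μ) (hw_int : Integrable w μ) :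
    ∫ x, a x ∂μ ≤
      (∫ x, (a x ^ p / w x) ^ (1 / (p - 1)) ∂μ) ^ ((p - 1) / p) * (∫ x, w x ∂μ) ^ (1 / p) := by
  have hp0 : 0 < p := zero_lt_one.trans hp
  have hp1 : 0 < p - 1 := sub_pos.2 hp
  have hq0 : 0 < p / (p - 1) := div_pos hp0 hp1
  set φ : α → ℝ := fun x => (a x ^ p / w x) ^ (1 / p)
  set ψ : α → ℝ := fun x => w x ^ (1 / p)
  have ha_eq : a =ᵐ[μ] fun x => φ x * ψ x := by
    filter_upwards [ha, hw] with x (hax : 0 ≤ a x) hwx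
    simp only [φ, ψ]
    rw [← Real.mul_rpow (by positivity) hwx.le, div_mul_cancel₀ _ hwx.ne',
      ← Real.rpow_mul hax, mul_one_div_cancel hp0.ne', Real.rpow_one]
  have hφq : (fun x => φ x ^ (p / (p - 1))) =ᵐ[μ] fun x => (a x ^ p / w x) ^ (1 / (p - 1)) := by
    filter_upwards [ha, hw] with x (hax : 0 ≤ a x) hwx
    rw [← Real.rpow_mul (by positivity)]
    congr 1
    field_simp
  have hψp : (fun x => ψ x ^ p) =ᵐ[μ] w := by
    filter_upwards [hw] with x hwx
    rw [← Real.rpow_mul hwx.le, one_div_mul_cancel hp0.ne', Real.rpow_one]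
  have hφ_meas : AEStronglyMeasurable φ μ :=
    ((ha_meas.aemeasurable.pow_const p).div hw_meas.aemeasurable).pow_const _
      |>.aestronglyMeasurable
  have hψ_meas : AEStronglyMeasurable ψ μ :=
    (hw_meas.aemeasurable.pow_const _).aestronglyMeasurable
  have hφ_nonneg : 0 ≤ᵐ[μ] φ := by
    filter_upwards [ha, hw] with x (hax : 0 ≤ a x) hwx
    positivity
  have hψ_nonneg : 0 ≤ᵐ[μ] ψ := by
    filter_upwards [hw] with x hwx
    positivity
  have hφ_mem : MemLp φ (ENNReal.ofReal (p / (p - 1))) μ :=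
    memLp_ofReal_of_integrable_rpow hq0 hφ_nonneg hφ_meas (hD.congr hφq.symm)
  have hψ_mem : MemLp ψ (ENNReal.ofReal p) μ :=
    memLp_ofReal_of_integrable_rpow hp0 hψ_nonneg hψ_meas (hw_int.congr hψp.symm)
  have hpq : (p / (p - 1)).HolderConjugate p := (Real.HolderConjugate.conjExponent hp).symm
  have holder := integral_mul_le_Lp_mul_Lq_of_nonneg hpq hφ_nonneg hψ_nonneg hφ_mem hψ_mem
  rwa [integral_congr_ae hφq, integral_congr_ae hψp, one_div_div,
    ← integral_congr_ae ha_eq] at holder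

theorem rpow_integral_le_of_weight {p : ℝ} (hp : 1 < p) {a w : α → ℝ}
    (ha : 0 ≤ᵐ[μ] a) (hw : ∀ᵐ x ∂μ, 0 < w x)
    (ha_meas : AEStronglyMeasurable a μ) (hw_meas : AEStronglyMeasurable w μ)
    (hD : Integrable (fun x => (a x ^ p / w x) ^ (1 / (p - 1))) μ) (hw_int : Integrable w μ) :
    (∫ x, a x ∂μ) ^ p ≤
      (∫ x, (a x ^ p / w x) ^ (1 / (p - 1)) ∂μ) ^ (p - 1) * ∫ x, w x ∂μ := by
  have hp0 : 0 < p := zero_lt_one.trans hp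
  have hΛ : 0 ≤ ∫ x, (a x ^ p / w x) ^ (1 / (p - 1)) ∂μ := by
    refine integral_nonneg_of_ae ?_
    filter_upwards [ha, hw] with x (hax : 0 ≤ a x) hwx
    positivity
  have hW : 0 ≤ ∫ x, w x ∂μ := integral_nonneg_of_ae (hw.mono fun x hx => hx.le)
  calc (∫ x, a x ∂μ) ^ p
      ≤ ((∫ x, (a x ^ p / w x) ^ (1 / (p - 1)) ∂μ) ^ ((p - 1) / p) *
          (∫ x, w x ∂μ) ^ (1 / p)) ^ p :=
        Real.rpow_le_rpow (integral_nonneg_of_ae ha)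
          (integral_le_of_weight hp ha hw ha_meas hw_meas hD hw_int) hp0.le
    _ = (∫ x, (a x ^ p / w x) ^ (1 / (p - 1)) ∂μ) ^ (p - 1) * ∫ x, w x ∂μ := by
        rw [Real.mul_rpow (by positivity) (by positivity), ← Real.rpow_mul hΛ,
          ← Real.rpow_mul hW, div_mul_cancel₀ _ hp0.ne', one_div_mul_cancel hp0.ne',
          Real.rpow_one]

theorem integral_le_toReal_lintegral_ofReal (f : α → ℝ) :
    ∫ x, f x ∂μ ≤ (∫⁻ x, ENNReal.ofReal (f x) ∂μ).toReal := by
  by_cases hf : Integrable f μ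
  · rw [integral_eq_lintegral_pos_part_sub_lintegral_neg_part hf]
    exact sub_le_self _ ENNReal.toReal_nonneg
  · rw [integral_undef hf]
    exact ENNReal.toReal_nonneg

end MeasureSpace

theorem ofReal_mul_exp_I_mul_eq_circleMap (r θ : ℝ) :
    (r : ℂ) * Complex.exp (Complex.I * θ) = circleMap 0 r θ := by
  rw [circleMap_zero, mul_comm Complex.I]

theorem Complex.polarCoord_symm_eq_circleMap (p : ℝ × ℝ) :
    Complex.polarCoord.symm p = circleMap 0 p.1 p.2 := by
  simp [circleMap_zero, Complex.exp_mul_I]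

theorem continuous_circleMap_zero_uncurry :
    Continuous fun p : ℝ × ℝ => circleMap 0 p.1 p.2 := by
  simp only [circleMap_zero]
  fun_prop

theorem intervalIntegral_circleMap_eq_integral_Ioo {E : Type*} [NormedAddCommGroup E]
    [NormedSpace ℝ E] (g : ℂ → E) (r : ℝ) :
    ∫ θ in (0 : ℝ)..2 * π, g (circleMap 0 r θ) = ∫ θ in Ioo (-π) π, g (circleMap 0 r θ) := by
  have hper : Function.Periodic (fun θ => g (circleMap 0 r θ)) (2 * π) := fun θ => by
    simp only [periodic_circleMap 0 r θ]
  have hshift := hper.intervalIntegral_add_eq 0 (-π)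
  rw [zero_add, show -π + 2 * π = π by ring] at hshift
  rw [hshift, intervalIntegral.integral_of_le (by linarith [Real.pi_pos]),
    integral_Ioc_eq_integral_Ioo]

theorem lintegral_eq_lintegral_circleMap {g : ℂ → ℝ≥0∞} (hg : Measurable g) :
    ∫⁻ z, g z = ∫⁻ r in Ioi 0, ∫⁻ θ in Ioo (-π) π, ENNReal.ofReal r * g (circleMap 0 r θ) := by
  rw [← Complex.lintegral_comp_polarCoord_symm]
  simp only [Complex.polarCoord_symm_eq_circleMap, smul_eq_mul]
  rw [polarCoord_target, Measure.volume_eq_prod, ← Measure.prod_restrict]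
  exact lintegral_prod _ ((ENNReal.measurable_ofReal.comp measurable_fst).mul
    (hg.comp continuous_circleMap_zero_uncurry.measurable)).aemeasurable

theorem circleMap_zero_mem_annulus_iff {r₁ r₂ r : ℝ} (hr : 0 ≤ r) (θ : ℝ) :
    circleMap 0 r θ ∈ ball (0 : ℂ) r₂ \ closedBall 0 r₁ ↔ r ∈ Ioo r₁ r₂ := by
  simp [norm_circleMap_zero, abs_of_nonneg hr, and_comm]

theorem setLIntegral_annulus_eq {g : ℂ → ℝ≥0∞} (hg : Measurable g) {r₁ r₂ : ℝ} (hr₁ : 0 ≤ r₁) :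
    ∫⁻ z in ball (0 : ℂ) r₂ \ closedBall 0 r₁, g z =
      ∫⁻ r in Ioo r₁ r₂, ∫⁻ θ in Ioo (-π) π, ENNReal.ofReal r * g (circleMap 0 r θ) := by
  have hA : MeasurableSet (ball (0 : ℂ) r₂ \ closedBall 0 r₁) :=
    measurableSet_ball.diff measurableSet_closedBall
  have hslice : ∀ r ∈ Ioi (0 : ℝ),
      ∫⁻ θ in Ioo (-π) π, ENNReal.ofReal r *
          (ball (0 : ℂ) r₂ \ closedBall 0 r₁).indicator g (circleMap 0 r θ) =
        (Ioo r₁ r₂).indicator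
          (fun r => ∫⁻ θ in Ioo (-π) π, ENNReal.ofReal r * g (circleMap 0 r θ)) r := by
    intro r hr
    by_cases hmem : r ∈ Ioo r₁ r₂
    · simp only [indicator_of_mem hmem, indicator_of_mem
        ((circleMap_zero_mem_annulus_iff (le_of_lt hr) _).2 hmem)]
    · simp only [indicator_of_notMem hmem, indicator_of_notMem
        (mt (circleMap_zero_mem_annulus_iff (le_of_lt hr) _).1 hmem), mul_zero, lintegral_zero]
  rw [← lintegral_indicator hA, lintegral_eq_lintegral_circleMap (hg.indicator hA),
    setLIntegral_congr_fun measurableSet_Ioi hslice, lintegral_indicator measurableSet_Ioo,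
    Measure.restrict_restrict measurableSet_Ioo,
    inter_eq_left.2 (Ioo_subset_Ioi_self.trans (Ioi_subset_Ioi hr₁))]

theorem ae_circleMap_of_ae {P : ℂ → Prop} (h : ∀ᵐ z, P z) :
    ∀ᵐ r ∂volume.restrict (Ioi 0), ∀ᵐ θ ∂volume.restrict (Ioo (-π) π),
      P (circleMap 0 r θ) := by
  set N := toMeasurable volume {z | ¬P z}
  have hN : MeasurableSet N := measurableSet_toMeasurable _ _
  have hmeas : Measurable fun p : ℝ × ℝ =>
      ENNReal.ofReal p.1 * N.indicator (1 : ℂ → ℝ≥0∞) (circleMap 0 p.1 p.2) :=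
    (ENNReal.measurable_ofReal.comp measurable_fst).mul
      ((measurable_one.indicator hN).comp continuous_circleMap_zero_uncurry.measurable)
  have hzero : ∫⁻ p in polarCoord.target,
      ENNReal.ofReal p.1 * N.indicator (1 : ℂ → ℝ≥0∞) (circleMap 0 p.1 p.2) = 0 := by
    have := Complex.lintegral_comp_polarCoord_symm (N.indicator 1)
    simp only [Complex.polarCoord_symm_eq_circleMap, smul_eq_mul] at this
    rw [this, lintegral_indicator_one hN, measure_toMeasurable]
    exact h
  have hprod : ∀ᵐ p ∂volume.restrict polarCoord.target, P (circleMap 0 p.1 p.2) := by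
    filter_upwards [(lintegral_eq_zero_iff hmeas).1 hzero,
      ae_restrict_mem polarCoord.open_target.measurableSet] with p hp hmem
    rw [polarCoord_target] at hmem
    have hp1 : ENNReal.ofReal p.1 ≠ 0 := by simpa using hmem.1
    by_contra hP
    simp only [Pi.zero_apply, mul_eq_zero, hp1, false_or, indicator_apply_eq_zero,
      Pi.one_apply, one_ne_zero, imp_false] at hp
    exact hp (subset_toMeasurable volume {z | ¬P z} hP)
  rw [polarCoord_target, Measure.volume_eq_prod, ← Measure.prod_restrict] at hprod
  exact Measure.ae_ae_of_ae_prod hprod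

theorem measurable_jacobian (f : ℂ → ℂ) : Measurable (jacobian f) :=
  ContinuousLinearMap.continuous_det.measurable.comp (measurable_fderiv ℝ f)

theorem measurable_angDeriv (f : ℂ → ℂ) : Measurable (angDeriv f) :=
  isBoundedBilinearMap_apply.continuous.measurable.comp
    ((measurable_fderiv ℝ f).prodMk (measurable_const.mul measurable_id))

theorem angDil_circleMap (f : ℂ → ℂ) (p : ℝ) {r : ℝ} (hr : 0 ≤ r) (θ : ℝ) :
    angDil f p (circleMap 0 r θ) =
      ‖angDeriv f (circleMap 0 r θ)‖ ^ p / (r ^ p * jacobian f (circleMap 0 r θ)) := by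
  rw [angDil, norm_circleMap_zero, abs_of_nonneg hr]

theorem curveLen_eq_integral_Ioo (f : ℂ → ℂ) (r : ℝ) :
    curveLen f r = ∫ θ in Ioo (-π) π, ‖angDeriv f (circleMap 0 r θ)‖ := by
  simp only [curveLen, ofReal_mul_exp_I_mul_eq_circleMap]
  exact intervalIntegral_circleMap_eq_integral_Ioo (fun z => ‖angDeriv f z‖) r

theorem dMean_eq_integral_Ioo (f : ℂ → ℂ) (p r : ℝ) :
    dMean f p r =
      ((2 * π)⁻¹ * ∫ θ in Ioo (-π) π, angDil f p (circleMap 0 r θ) ^ (1 / (p - 1))) ^ (p - 1) := by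
  simp only [dMean, circMean, ofReal_mul_exp_I_mul_eq_circleMap]
  rw [intervalIntegral_circleMap_eq_integral_Ioo (fun z => angDil f p z ^ (1 / (p - 1))) r]

theorem rpow_mul_dMean_eq (f : ℂ → ℂ) (p : ℝ) {r : ℝ} (hr : 0 ≤ r)
    (hΛ : 0 ≤ ∫ θ in Ioo (-π) π, angDil f p (circleMap 0 r θ) ^ (1 / (p - 1))) :
    (2 * π * r) ^ (p - 1) * dMean f p r =
      r ^ (p - 1) *
        (∫ θ in Ioo (-π) π, angDil f p (circleMap 0 r θ) ^ (1 / (p - 1))) ^ (p - 1) := by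
  rw [dMean_eq_integral_Ioo, ← Real.mul_rpow (by positivity) (by positivity),
    ← Real.mul_rpow hr hΛ]
  congr 1
  field_simp

theorem curveLen_rpow_div_le {f : ℂ → ℂ} {p : ℝ} (hp : 1 < p) {r : ℝ} (hr : 0 < r)
    (hJ_pos : ∀ᵐ θ ∂volume.restrict (Ioo (-π) π), 0 < jacobian f (circleMap 0 r θ))
    (hJ_int : IntegrableOn (fun θ => jacobian f (circleMap 0 r θ)) (Ioo (-π) π)) :
    curveLen f r ^ p / ((2 * π * r) ^ (p - 1) * dMean f p r) ≤
      r * ∫ θ in Ioo (-π) π, jacobian f (circleMap 0 r θ) := by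
  have hp1 : 0 < p - 1 := sub_pos.2 hp
  have hJ_nonneg : 0 ≤ ∫ θ in Ioo (-π) π, jacobian f (circleMap 0 r θ) :=
    integral_nonneg_of_ae (hJ_pos.mono fun θ hθ => hθ.le)
  set Λ := ∫ θ in Ioo (-π) π, angDil f p (circleMap 0 r θ) ^ (1 / (p - 1))
  by_cases hΛ_int :
      IntegrableOn (fun θ => angDil f p (circleMap 0 r θ) ^ (1 / (p - 1))) (Ioo (-π) π)
  case neg =>
    -- junk value: then `d_p(r) = 0` and the left-hand side is `x / 0 = 0`
    rw [dMean_eq_integral_Ioo, integral_undef hΛ_int, mul_zero, Real.zero_rpow hp1.ne', mul_zero,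
      div_zero]
    positivity
  have hcirc : Continuous (circleMap 0 r) := continuous_circleMap 0 r
  have hholder := rpow_integral_le_of_weight hp (μ := volume.restrict (Ioo (-π) π))
    (a := fun θ => ‖angDeriv f (circleMap 0 r θ)‖)
    (w := fun θ => r ^ p * jacobian f (circleMap 0 r θ))
    (ae_of_all _ fun θ => norm_nonneg _)
    (hJ_pos.mono fun θ hθ => by positivity)
    ((measurable_angDeriv f).norm.comp hcirc.measurable).aestronglyMeasurable
    (((measurable_jacobian f).comp hcirc.measurable).const_mul _).aestronglyMeasurable
    (by simpa only [IntegrableOn, angDil_circleMap f p hr.le] using hΛ_int) (hJ_int.const_mul _)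
  simp only [← angDil_circleMap f p hr.le, ← curveLen_eq_integral_Ioo, integral_const_mul]
    at hholder
  have hΛ_nonneg : 0 ≤ Λ := by
    refine integral_nonneg_of_ae ?_
    filter_upwards [hJ_pos] with θ hθ
    rw [angDil_circleMap f p hr.le]
    positivity
  rw [rpow_mul_dMean_eq f p hr.le hΛ_nonneg]
  refine div_le_of_le_mul₀ (by positivity) (by positivity) ?_
  calc curveLen f r ^ p
      ≤ Λ ^ (p - 1) * (r ^ p * ∫ θ in Ioo (-π) π, jacobian f (circleMap 0 r θ)) := hholder
    _ = r * (∫ θ in Ioo (-π) π, jacobian f (circleMap 0 r θ)) * (r ^ (p - 1) * Λ ^ (p - 1)) := by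
        rw [show r ^ p = r * r ^ (p - 1) by
          rw [← Real.rpow_one_add' hr.le (by linarith), add_sub_cancel]]
        ring

theorem ofReal_curveLen_rpow_div_le_lintegral {f : ℂ → ℂ} {p : ℝ} (hp : 1 < p) {r : ℝ}
    (hr : 0 < r)
    (hJ_pos : ∀ᵐ θ ∂volume.restrict (Ioo (-π) π), 0 < jacobian f (circleMap 0 r θ)) :
    ENNReal.ofReal (curveLen f r ^ p / ((2 * π * r) ^ (p - 1) * dMean f p r)) ≤
      ∫⁻ θ in Ioo (-π) π, ENNReal.ofReal r * ENNReal.ofReal (jacobian f (circleMap 0 r θ)) := by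
  have hJ_meas : Measurable fun θ => jacobian f (circleMap 0 r θ) :=
    (measurable_jacobian f).comp (measurable_circleMap 0 r)
  have hJ_nonneg := hJ_pos.mono fun θ hθ => hθ.le
  rw [lintegral_const_mul _ hJ_meas.ennreal_ofReal]
  by_cases hJ_int : IntegrableOn (fun θ => jacobian f (circleMap 0 r θ)) (Ioo (-π) π)
  · rw [← ofReal_integral_eq_lintegral_ofReal hJ_int hJ_nonneg, ← ENNReal.ofReal_mul hr.le]
    exact ENNReal.ofReal_le_ofReal (curveLen_rpow_div_le hp hr hJ_pos hJ_int)
  · rw [IntegrableOn, ← lintegral_ofReal_ne_top_iff_integrable hJ_meas.aestronglyMeasurable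
      hJ_nonneg, not_not] at hJ_int
    rw [hJ_int, ENNReal.mul_top (by simpa using hr)]
    exact le_top

namespace IsRegularHomeo

variable {f : ℂ → ℂ}

theorem injOn (hf : IsRegularHomeo f) : InjOn f (ball (0 : ℂ) 1) := by
  obtain ⟨e, he⟩ := hf.1
  intro x hx y hy hxy
  have : e ⟨x, hx⟩ = e ⟨y, hy⟩ := Subtype.ext (by rw [he, he, hxy])
  simpa using e.injective this

theorem mapsTo (hf : IsRegularHomeo f) : MapsTo f (ball (0 : ℂ) 1) (ball (0 : ℂ) 1) := by
  obtain ⟨e, he⟩ := hf.1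
  intro x hx
  rw [← he ⟨x, hx⟩]
  exact (e ⟨x, hx⟩).2

theorem isOpen_image_ball (hf : IsRegularHomeo f) {r : ℝ} (hr : r ≤ 1) :
    IsOpen (f '' ball (0 : ℂ) r) := by
  obtain ⟨e, he⟩ := hf.1
  have himage : f '' ball (0 : ℂ) r = Subtype.val '' (e '' (Subtype.val ⁻¹' ball (0 : ℂ) r)) := by
    ext w
    constructor
    · rintro ⟨x, hx, rfl⟩
      have hx1 : x ∈ ball (0 : ℂ) 1 := ball_subset_ball hr hx
      exact ⟨e ⟨x, hx1⟩, ⟨⟨x, hx1⟩, hx, rfl⟩, he ⟨x, hx1⟩⟩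
    · rintro ⟨u, ⟨v, hv, rfl⟩, rfl⟩
      exact ⟨v, hv, (he v).symm⟩
  rw [himage]
  exact isOpen_ball.isOpenMap_subtype_val _
    (e.isOpenMap _ (continuous_subtype_val.isOpen_preimage _ isOpen_ball))

theorem volume_image_ball_ne_top (hf : IsRegularHomeo f) {r : ℝ} (hr : r ≤ 1) :
    volume (f '' ball (0 : ℂ) r) ≠ ⊤ :=
  ne_top_of_le_ne_top measure_ball_lt_top.ne
    (measure_mono ((hf.mapsTo.mono_left (ball_subset_ball hr)).image_subset))

theorem volume_image_ball_sdiff_ball (hf : IsRegularHomeo f) {r₁ r₂ : ℝ} (h₁₂ : r₁ ≤ r₂)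
    (h₂ : r₂ ≤ 1) :
    volume (f '' (ball (0 : ℂ) r₂ \ ball 0 r₁)) =
      volume (f '' ball (0 : ℂ) r₂) - volume (f '' ball (0 : ℂ) r₁) := by
  rw [(hf.injOn.mono (ball_subset_ball h₂)).image_sdiff_subset (ball_subset_ball h₁₂)]
  exact measure_sdiff (image_mono (ball_subset_ball h₁₂))
    (hf.isOpen_image_ball (h₁₂.trans h₂)).measurableSet.nullMeasurableSet
    (hf.volume_image_ball_ne_top (h₁₂.trans h₂))

theorem lintegral_jacobian_le (hf : IsRegularHomeo f) {s : Set ℂ} (hs : MeasurableSet s)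
    (hs1 : s ⊆ ball (0 : ℂ) 1) :
    ∫⁻ z in s, ENNReal.ofReal (jacobian f z) ≤ volume (f '' s) := by
  set good : Set ℂ := {z | DifferentiableAt ℝ f z ∧ 0 < jacobian f z}
  have hgood : MeasurableSet good := (measurableSet_of_differentiableAt ℝ f).inter
    (measurableSet_lt measurable_const (measurable_jacobian f))
  have hs_ae : (s ∩ good : Set ℂ) =ᵐ[volume] (s : Set ℂ) := by
    filter_upwards [(ae_restrict_iff' measurableSet_ball).1 hf.2.1] with z hz
    exact propext ⟨And.left, fun hzs => ⟨hzs, hz (hs1 hzs)⟩⟩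
  calc ∫⁻ z in s, ENNReal.ofReal (jacobian f z)
      = ∫⁻ z in s ∩ good, ENNReal.ofReal |(fderiv ℝ f z).det| := by
        rw [setLIntegral_congr hs_ae.symm]
        refine setLIntegral_congr_fun (hs.inter hgood) fun z hz => ?_
        rw [← jacobian, abs_of_pos hz.2.2]
    _ ≤ volume (f '' (s ∩ good)) :=
        lintegral_abs_det_fderiv_le_addHaar_image volume (hs.inter hgood)
          (fun z hz => hz.2.1.hasFDerivAt.hasFDerivWithinAt)
          (hf.injOn.mono (inter_subset_left.trans hs1))
    _ ≤ volume (f '' s) := measure_mono (image_mono inter_subset_left)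

theorem lintegral_jacobian_annulus_le (hf : IsRegularHomeo f) {r₁ r₂ : ℝ} (h₁₂ : r₁ ≤ r₂)
    (h₂ : r₂ ≤ 1) :
    ∫⁻ z in ball (0 : ℂ) r₂ \ closedBall 0 r₁, ENNReal.ofReal (jacobian f z) ≤
      volume (f '' ball (0 : ℂ) r₂) - volume (f '' ball (0 : ℂ) r₁) :=
  calc _ ≤ volume (f '' (ball (0 : ℂ) r₂ \ closedBall 0 r₁)) :=
        hf.lintegral_jacobian_le (measurableSet_ball.diff measurableSet_closedBall)
          (sdiff_subset.trans (ball_subset_ball h₂))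
    _ ≤ volume (f '' (ball (0 : ℂ) r₂ \ ball 0 r₁)) :=
        measure_mono (image_mono (sdiff_subset_sdiff_right ball_subset_closedBall))
    _ = _ := hf.volume_image_ball_sdiff_ball h₁₂ h₂

theorem ae_jacobian_pos_circleMap (hf : IsRegularHomeo f) :
    ∀ᵐ r ∂volume.restrict (Ioo 0 1), ∀ᵐ θ ∂volume.restrict (Ioo (-π) π),
      0 < jacobian f (circleMap 0 r θ) := by
  filter_upwards [ae_restrict_of_ae_restrict_of_subset Ioo_subset_Ioi_self
      (ae_circleMap_of_ae ((ae_restrict_iff' measurableSet_ball).1 hf.2.1)),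
    ae_restrict_mem measurableSet_Ioo] with r hr hmem
  filter_upwards [hr] with θ hθ
  refine (hθ ?_).2
  rw [mem_ball_zero_iff, norm_circleMap_zero, abs_of_pos hmem.1]
  exact hmem.2

end IsRegularHomeo

/-- **Length–area principle.** For `0 < r₁ < r₂ < 1`,
`∫_{r₁}^{r₂} L(r)^p/((2πr)^{p-1} d_p(r)) dr ≤ S(r₂) - S(r₁) ≤ S(r₂)`. -/
theorem length_area_principle (f : ℂ → ℂ) (hf : IsRegularHomeo f) (p : ℝ) (hp : 1 < p) :
    ∀ r₁ r₂ : ℝ, 0 < r₁ → r₁ < r₂ → r₂ < 1 →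
      (∫ r in r₁..r₂, curveLen f r ^ p / ((2 * Real.pi * r) ^ (p - 1) * dMean f p r)) ≤
          areaFn f r₂ - areaFn f r₁ ∧
        areaFn f r₂ - areaFn f r₁ ≤ areaFn f r₂ := by
  intro r₁ r₂ h₁ h₁₂ h₂
  refine ⟨?_, sub_le_self _ ENNReal.toReal_nonneg⟩
  have hslices : ∫⁻ r in Ioo r₁ r₂,
      ENNReal.ofReal (curveLen f r ^ p / ((2 * π * r) ^ (p - 1) * dMean f p r)) ≤
        ∫⁻ z in ball (0 : ℂ) r₂ \ closedBall 0 r₁, ENNReal.ofReal (jacobian f z) := by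
    rw [setLIntegral_annulus_eq (measurable_jacobian f).ennreal_ofReal h₁.le]
    refine lintegral_mono_ae ?_
    filter_upwards [ae_restrict_of_ae_restrict_of_subset (Ioo_subset_Ioo h₁.le h₂.le)
      hf.ae_jacobian_pos_circleMap, ae_restrict_mem measurableSet_Ioo] with r hr hmem
    exact ofReal_curveLen_rpow_div_le_lintegral hp (h₁.trans hmem.1) hr
  calc (∫ r in r₁..r₂, curveLen f r ^ p / ((2 * π * r) ^ (p - 1) * dMean f p r))
      = ∫ r in Ioo r₁ r₂, curveLen f r ^ p / ((2 * π * r) ^ (p - 1) * dMean f p r) := by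
        rw [intervalIntegral.integral_of_le h₁₂.le, integral_Ioc_eq_integral_Ioo]
    _ ≤ (volume (f '' ball (0 : ℂ) r₂) - volume (f '' ball (0 : ℂ) r₁)).toReal :=
        (integral_le_toReal_lintegral_ofReal _).trans (ENNReal.toReal_mono
          (ENNReal.sub_ne_top (hf.volume_image_ball_ne_top h₂.le))
          (hslices.trans (hf.lintegral_jacobian_annulus_le h₁₂.le h₂.le)))
    _ = areaFn f r₂ - areaFn f r₁ :=
        ENNReal.toReal_sub_of_le (measure_mono (image_mono (ball_subset_ball h₁₂.le)))
          (hf.volume_image_ball_ne_top h₂.le)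
end
end

section
/- Let m > 0, let σ : 𝔹 → ℂ be measurable, and let f : 𝔹 → 𝔹 be a regular sense-preserving homeomorphic solution of the equation f_r = σ(re^{iθ}) |f_θ|^m f_θ, differentiable a.e. with nonvanishing Jacobian. Then a.e. in 𝔹 \ {0} the (m+2)-angular dilatation of f satisfies D_{m+2}(z) = |f_θ|^{m+2} / (r^{m+1} |f_θ|^{m+2} Im σ̄(z)) = 1/(r^{m+1} Im σ̄(z)); equivalently, for every p > 1, D_p(z) = |f_θ|^p / (r^{p-1} |f_θ|^{m+2} Im σ̄(z)), where z = re^{iθ}. -/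
/-! Writing the real differential `L` of `f` in the basis `1, i` gives
`Im (conj (L z) · L (i z)) = |z|² det L`, i.e. the polar formula `r J_f = Im (conj f_r · f_θ)`.
Substituting the equation `f_r = σ |f_θ|^m f_θ` turns the right-hand side into
`|f_θ|^{m+2} Im σ̄`, and both dilatation identities follow by dividing `|f_θ|^p` by
`r^p J_f = r^{p-1} |f_θ|^{m+2} Im σ̄`; positivity of `J_f` rules out `f_θ = 0`. -/

open MeasureTheory Filter Metric Set
open scoped Real Topology

noncomputable section

open ComplexConjugate

namespace LinearMap

theorem det_eq_im_conj_apply_one_mul_apply_I (L : ℂ →ₗ[ℝ] ℂ) :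
    L.det = (conj (L 1) * L Complex.I).im := by
  rw [← LinearMap.det_toMatrix Complex.basisOneI, Matrix.det_fin_two]
  simp only [toMatrix_apply, Complex.coe_basisOneI, Complex.coe_basisOneI_repr,
    Matrix.cons_val_zero, Matrix.cons_val_one, Matrix.cons_val_fin_one, Complex.mul_im,
    Complex.conj_re, Complex.conj_im]
  ring

theorem im_conj_apply_mul_apply_I_mul (L : ℂ →ₗ[ℝ] ℂ) (z : ℂ) :
    (conj (L z) * L (Complex.I * z)).im = Complex.normSq z * L.det := by
  have hz : L z = z.re • L 1 + z.im • L Complex.I := by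
    rw [← L.map_smul, ← L.map_smul, ← map_add]; congr 1; simp
  have hIz : L (Complex.I * z) = (-z.im) • L 1 + z.re • L Complex.I := by
    rw [← L.map_smul, ← L.map_smul, ← map_add]; congr 1; simp [Complex.ext_iff]
  rw [det_eq_im_conj_apply_one_mul_apply_I, hz, hIz]
  simp only [Complex.real_smul, map_add, map_mul, Complex.normSq_apply,
    Complex.add_im, Complex.mul_im, Complex.add_re, Complex.mul_re,
    Complex.conj_re, Complex.conj_im, Complex.ofReal_re, Complex.ofReal_im]
  ring

end LinearMap

theorem im_conj_radDeriv_mul_angDeriv {f : ℂ → ℂ} {z : ℂ} (hz : z ≠ 0) :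
    (conj (radDeriv f z) * angDeriv f z).im = ‖z‖ * jacobian f z := by
  have hrad : radDeriv f z = ((‖z‖⁻¹ : ℝ) : ℂ) * fderiv ℝ f z z := by
    rw [radDeriv, div_eq_inv_mul, ← Complex.ofReal_inv, ← Complex.real_smul, map_smul,
      Complex.real_smul]
  have hpolar := (fderiv ℝ f z : ℂ →ₗ[ℝ] ℂ).im_conj_apply_mul_apply_I_mul z
  rw [ContinuousLinearMap.coe_coe] at hpolar
  rw [hrad, map_mul, Complex.conj_ofReal, angDeriv, mul_assoc, Complex.im_ofReal_mul,
    hpolar, Complex.normSq_eq_norm_sq, jacobian]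
  field_simp

theorem im_conj_mul_ofReal_mul_mul_self (s : ℂ) (c : ℝ) (v : ℂ) :
    (conj (s * c * v) * v).im = c * ‖v‖ ^ 2 * (conj s).im := by
  have hconj : conj (s * c * v) * v = ((c * ‖v‖ ^ 2 : ℝ) : ℂ) * conj s := by
    rw [map_mul, map_mul, Complex.conj_ofReal]
    push_cast
    rw [← Complex.conj_mul']
    ring
  rw [hconj, Complex.im_ofReal_mul]

theorem norm_mul_jacobian_eq_of_radDeriv_eq {f : ℂ → ℂ} {σ : ℂ} {m : ℝ} {z : ℂ} (hz : z ≠ 0)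
    (hJ : 0 < jacobian f z)
    (heq : radDeriv f z = σ * (↑(‖angDeriv f z‖ ^ m) : ℂ) * angDeriv f z) :
    ‖z‖ * jacobian f z = ‖angDeriv f z‖ ^ (m + 2) * (conj σ).im := by
  have hpolar := im_conj_radDeriv_mul_angDeriv (f := f) hz
  rw [heq, im_conj_mul_ofReal_mul_mul_self] at hpolar
  have hrJ := mul_pos (norm_pos_iff.mpr hz) hJ
  have ha : ‖angDeriv f z‖ ≠ 0 := fun ha => hrJ.ne' (by rw [← hpolar, ha]; simp)
  rw [← hpolar, ← Real.rpow_add_natCast ha]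
  norm_num

theorem angDil_eq_of_norm_mul_jacobian_eq {f : ℂ → ℂ} {z : ℂ} {q s : ℝ} (hz : z ≠ 0)
    (h : ‖z‖ * jacobian f z = ‖angDeriv f z‖ ^ q * s) (p : ℝ) :
    angDil f p z = ‖angDeriv f z‖ ^ p / (‖z‖ ^ (p - 1) * ‖angDeriv f z‖ ^ q * s) := by
  have hr := norm_pos_iff.mpr hz
  rw [angDil, Real.rpow_sub hr, Real.rpow_one, mul_assoc (_ / _), ← h]
  field_simp

theorem angDil_eq_inv_of_norm_mul_jacobian_eq {f : ℂ → ℂ} {z : ℂ} {q s : ℝ} (hz : z ≠ 0)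
    (hJ : 0 < jacobian f z) (h : ‖z‖ * jacobian f z = ‖angDeriv f z‖ ^ q * s) :
    angDil f q z = (‖z‖ ^ (q - 1) * s)⁻¹ := by
  have hrJ := mul_pos (norm_pos_iff.mpr hz) hJ
  have ha : ‖angDeriv f z‖ ^ q ≠ 0 := fun ha => hrJ.ne' (by rw [h, ha, zero_mul])
  rw [angDil_eq_of_norm_mul_jacobian_eq hz h q]
  field_simp

theorem beltrami_dilatation_identity_general (m : ℝ) (σ : ℂ → ℂ)
    (f : ℂ → ℂ)
    (hreg : ∀ᵐ z ∂(volume.restrict (ball (0:ℂ) 1)),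
      DifferentiableAt ℝ f z ∧ 0 < jacobian f z)
    (heq : ∀ᵐ z ∂(volume.restrict (ball (0:ℂ) 1)),
      radDeriv f z = σ z * (↑(‖angDeriv f z‖ ^ m) : ℂ) * angDeriv f z) :
    ∀ᵐ z ∂(volume.restrict (ball (0:ℂ) 1 \ {0})),
      angDil f (m + 2) z =
          (‖z‖ ^ (m + 1) * (starRingEnd ℂ (σ z)).im)⁻¹ ∧
        ∀ p : ℝ, 1 < p →
          angDil f p z =
            ‖angDeriv f z‖ ^ p /
              (‖z‖ ^ (p - 1) * ‖angDeriv f z‖ ^ (m + 2) *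
                (starRingEnd ℂ (σ z)).im) := by
  filter_upwards [ae_restrict_of_ae_restrict_of_subset sdiff_subset hreg,
    ae_restrict_of_ae_restrict_of_subset sdiff_subset heq,
    ae_restrict_mem (measurableSet_ball.diff (measurableSet_singleton 0))]
    with z hregz hsol hz
  have hrJ := norm_mul_jacobian_eq_of_radDeriv_eq hz.2 hregz.2 hsol
  refine ⟨?_, fun p _ => angDil_eq_of_norm_mul_jacobian_eq hz.2 hrJ p⟩
  rw [angDil_eq_inv_of_norm_mul_jacobian_eq hz.2 hregz.2 hrJ, add_sub_assoc]
  norm_num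

/-- For a regular sense-preserving homeomorphic solution of `f_r = σ |f_θ|^m f_θ`,
a.e. in `𝔹 \ {0}` one has `D_{m+2}(z) = 1/(r^{m+1} Im σ̄(z))` and, for every `p > 1`,
`D_p(z) = |f_θ|^p / (r^{p-1} |f_θ|^{m+2} Im σ̄(z))`. -/
theorem beltrami_dilatation_identity (m : ℝ) (hm : 0 < m) (σ : ℂ → ℂ) (hσ : Measurable σ)
    (f : ℂ → ℂ)
    (hhomeo : ∃ e : (ball (0:ℂ) 1) ≃ₜ (ball (0:ℂ) 1), ∀ z : (ball (0:ℂ) 1), (e z : ℂ) = f z)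
    (hreg : ∀ᵐ z ∂(volume.restrict (ball (0:ℂ) 1)),
      DifferentiableAt ℝ f z ∧ 0 < jacobian f z)
    (heq : ∀ᵐ z ∂(volume.restrict (ball (0:ℂ) 1)),
      radDeriv f z = σ z * (↑(‖angDeriv f z‖ ^ m) : ℂ) * angDeriv f z) :
    ∀ᵐ z ∂(volume.restrict (ball (0:ℂ) 1 \ {0})),
      angDil f (m + 2) z =
          (‖z‖ ^ (m + 1) * (starRingEnd ℂ (σ z)).im)⁻¹ ∧
        ∀ p : ℝ, 1 < p →
          angDil f p z =
            ‖angDeriv f z‖ ^ p /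
              (‖z‖ ^ (p - 1) * ‖angDeriv f z‖ ^ (m + 2) *
                (starRingEnd ℂ (σ z)).im) :=
  beltrami_dilatation_identity_general m σ f hreg heq
end
end
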